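/- Fix integers K ≥ 0 and 0 ≤ i ≤ K. For every family (τ_α)_{α∈(0,1)} of detection rules in the change-point model satisfying P(τ_α < Γ) ≤ α for all α ∈ (0,1), and for every ε > 0, there exists α₀ ∈ (0,1) such that P(τ_α = Γ + i) ≤ α^{1−ε} for all 0 < α < α₀. (This is the per-term claim Pr(τ = Γ + i) ≐ α, 0 ≤ i ≤ K, used to prove the final Appendix Corollary Pr(Γ ≤ τ ≤ Γ + K) ≐ α.) -/

import Mathlib

/-!
Fix the change point `k + 1` and the alarm time `n = k + 1 + i`. On the first `n` observations,
the law under change point `k + 1` has density `∏_{k ≤ j < n} L(x_j)` with respect to the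
pure-noise law, `L` being the Gaussian likelihood ratio, and the pure-noise law is also the law
under change point `n + 1`. Hölder's inequality with exponents `1/t` and `1/(1-t)` therefore
gives `ν_{k+1}(τ = n) ≤ C · ν_{n+1}(τ = n)^{1-t}`, where `C` only involves the (finite)
`1/t`-th moment of `L`. Under change point `n + 1` the event `{τ = n}` is a false alarm, so
`(1-ρ)^n ρ · ν_{n+1}(τ = n) ≤ α`. Summing over `k` against the geometric prior leaves a
geometric series in `(1-ρ)^t`, hence `P(τ = Γ + i) = O(α^{1-t})`, and any `t < ε` absorbs the
constant for small `α`.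
-/

open MeasureTheory ProbabilityTheory Filter Set

noncomputable section

/-- The change-point probability measure `P = Σ_{k≥1} (1−ρ)^{k−1} ρ · (δ_k ⊗ ν_k)` on
`ℕ × (ℕ → ℝ)`.  The first coordinate is the change point `Γ` (geometric with parameter `ρ`),
the second coordinate is the observation sequence `(x₁, x₂, …)`, encoded as a function
`ℕ → ℝ` whose `i`-th value (0-based) is the observation `X_{i+1}`. -/
def changePointMeasure (ρ : ℝ) (ν : ℕ → Measure (ℕ → ℝ)) : Measure (ℕ × (ℕ → ℝ)) :=
  Measure.sum fun k : ℕ =>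
    (ENNReal.ofReal ((1 - ρ) ^ k * ρ)) • ((Measure.dirac (k + 1)).prod (ν (k + 1)))

/-- `ν k` is the countable product probability measure on sequences `(x₁, x₂, …) ∈ ℝ^ℕ`
whose `i`-th factor (1-based) is `N(0,σ²)` for `i < k` and `N(A,σ²)` for `i ≥ k`:
each `ν k` is a probability measure whose finite-dimensional marginals are the
corresponding finite Gaussian product measures.  (With 0-based coordinates, the factor of
coordinate `i`, i.e. of observation `X_{i+1}`, is `N(0,σ²)` iff `i + 1 < k`.) -/
def IsChangePointFamily (σ A : ℝ) (ν : ℕ → Measure (ℕ → ℝ)) : Prop :=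
  (∀ k, IsProbabilityMeasure (ν k)) ∧
    ∀ k n : ℕ,
      (ν k).map (fun x (i : Fin n) => x i) =
        Measure.pi fun i : Fin n =>
          if (i : ℕ) + 1 < k then gaussianReal 0 ⟨σ ^ 2, sq_nonneg σ⟩
          else gaussianReal A ⟨σ ^ 2, sq_nonneg σ⟩

/-- A detection rule: a (possibly infinite valued) stopping time `τ` on observation
sequences such that for every `n ≥ 1` the event `{τ = n}` is measurable with respect to
the σ-algebra generated by the first `n` observations `X₁, …, X_n`. -/
def IsDetectionRule (τ : (ℕ → ℝ) → ℕ∞) : Prop :=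
  ∀ n : ℕ, 1 ≤ n →
    MeasurableSet[MeasurableSpace.comap (fun x : ℕ → ℝ => fun i : Fin n => x i) inferInstance]
      {x | τ x = (n : ℕ∞)}

open scoped ENNReal NNReal Topology

lemma withDensity_apply_le_lintegral_rpow_mul {α : Type*} [MeasurableSpace α] (μ : Measure α)
    {f : α → ℝ≥0∞} (hf : Measurable f) {s : Set α} (hs : MeasurableSet s) {t : ℝ}
    (ht₀ : 0 < t) (ht₁ : t < 1) :
    μ.withDensity f s ≤ (∫⁻ x, f x ^ t⁻¹ ∂μ) ^ t * μ s ^ (1 - t) := by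
  have hpq := Real.HolderConjugate.inv_one_sub_inv ht₀ ht₁
  have hind : ∀ x, s.indicator (1 : α → ℝ≥0∞) x ^ (1 - t)⁻¹ = s.indicator 1 x := fun x => by
    by_cases hx : x ∈ s <;> simp [hx, hpq.symm.pos]
  calc μ.withDensity f s = ∫⁻ x, f x * s.indicator 1 x ∂μ := by
        rw [withDensity_apply _ hs, ← lintegral_indicator hs]
        congr 1 with x
        by_cases hx : x ∈ s <;> simp [hx]
    _ ≤ (∫⁻ x, f x ^ t⁻¹ ∂μ) ^ (1 / t⁻¹)
          * (∫⁻ x, s.indicator 1 x ^ (1 - t)⁻¹ ∂μ) ^ (1 / (1 - t)⁻¹) :=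
        ENNReal.lintegral_mul_le_Lp_mul_Lq μ hpq hf.aemeasurable
          (measurable_one.indicator hs).aemeasurable
    _ = (∫⁻ x, f x ^ t⁻¹ ∂μ) ^ t * μ s ^ (1 - t) := by
        simp only [hind, lintegral_indicator_one hs, one_div, inv_inv]

section Pi

variable {ι : Type*} [Fintype ι] {Ω : ι → Type*} [∀ i, MeasurableSpace (Ω i)]
  {μ : ∀ i, Measure (Ω i)} [∀ i, IsProbabilityMeasure (μ i)]

lemma lintegral_fintype_prod_eq_prod {f : ∀ i, Ω i → ℝ≥0∞} (hf : ∀ i, Measurable (f i)) :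
    ∫⁻ x, ∏ i, f i (x i) ∂Measure.pi μ = ∏ i, ∫⁻ y, f i y ∂μ i := by
  rw [lintegral_prod_eq_prod_lintegral_of_indepFun _ _
    (iIndepFun_pi fun i => (hf i).aemeasurable) fun i => (hf i).comp (measurable_pi_apply i)]
  exact Finset.prod_congr rfl fun i _ => (measurePreserving_eval μ i).lintegral_comp (hf i)

lemma pi_withDensity {f : ∀ i, Ω i → ℝ≥0∞} (hf : ∀ i, Measurable (f i))
    [∀ i, SigmaFinite ((μ i).withDensity (f i))] :
    Measure.pi (fun i => (μ i).withDensity (f i))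
      = (Measure.pi μ).withDensity fun x => ∏ i, f i (x i) := by
  refine Measure.pi_eq fun s hs => ?_
  have hpi : (univ.pi s).indicator (fun x => ∏ i, f i (x i))
      = fun x => ∏ i, (s i).indicator (f i) (x i) := by
    ext x
    by_cases hx : x ∈ univ.pi s
    · simp [hx, indicator_of_mem (hx _ (mem_univ _))]
    · obtain ⟨i, hi⟩ : ∃ i, x i ∉ s i := by simpa using hx
      rw [indicator_of_notMem hx,
        Finset.prod_eq_zero (Finset.mem_univ i) (indicator_of_notMem hi (f i))]
  rw [withDensity_apply _ (.univ_pi hs), ← lintegral_indicator (.univ_pi hs), hpi,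
    lintegral_fintype_prod_eq_prod fun i => (hf i).indicator (hs i)]
  exact Finset.prod_congr rfl fun i _ => by
    rw [withDensity_apply _ (hs i), lintegral_indicator (hs i)]

lemma pi_withDensity_apply_le {f : ∀ i, Ω i → ℝ≥0∞} (hf : ∀ i, Measurable (f i))
    [∀ i, SigmaFinite ((μ i).withDensity (f i))] {s : Set (∀ i, Ω i)} (hs : MeasurableSet s)
    {t : ℝ} (ht₀ : 0 < t) (ht₁ : t < 1) :
    Measure.pi (fun i => (μ i).withDensity (f i)) s
      ≤ (∏ i, ∫⁻ y, f i y ^ t⁻¹ ∂μ i) ^ t * Measure.pi μ s ^ (1 - t) := by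
  rw [pi_withDensity hf]
  have hprod : Measurable fun x : ∀ i, Ω i => ∏ i, f i (x i) :=
    Finset.measurable_prod _ fun i _ => (hf i).comp (measurable_pi_apply i)
  refine (withDensity_apply_le_lintegral_rpow_mul _ hprod hs ht₀ ht₁).trans_eq ?_
  simp_rw [← ENNReal.prod_rpow_of_nonneg (inv_pos.2 ht₀).le]
  rw [lintegral_fintype_prod_eq_prod fun i => (hf i).pow_const _]

end Pi

def gaussianLR (m : ℝ) (v : ℝ≥0) (x : ℝ) : ℝ≥0∞ :=
  ENNReal.ofReal (Real.exp ((m * x - m ^ 2 / 2) / v))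

@[fun_prop]
lemma measurable_gaussianLR (m : ℝ) (v : ℝ≥0) : Measurable (gaussianLR m v) := by
  unfold gaussianLR
  fun_prop

lemma gaussianReal_eq_withDensity_gaussianLR (m : ℝ) {v : ℝ≥0} (hv : v ≠ 0) :
    gaussianReal m v = (gaussianReal 0 v).withDensity (gaussianLR m v) := by
  rw [gaussianReal_of_var_ne_zero _ hv, gaussianReal_of_var_ne_zero _ hv,
    ← withDensity_mul _ (measurable_gaussianPDF 0 v) (measurable_gaussianLR m v)]
  congr 1 with x
  rw [Pi.mul_apply, gaussianPDF, gaussianPDF, gaussianLR,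
    ← ENNReal.ofReal_mul (gaussianPDFReal_nonneg _ _ _), gaussianPDFReal, gaussianPDFReal,
    mul_assoc _ (Real.exp _), ← Real.exp_add]
  congr 3
  have hv' : (v : ℝ) ≠ 0 := NNReal.coe_ne_zero.2 hv
  field_simp
  ring

lemma lintegral_gaussianLR_rpow_ne_top (m : ℝ) (v : ℝ≥0) (s : ℝ) :
    ∫⁻ x, gaussianLR m v x ^ s ∂gaussianReal 0 v ≠ ∞ := by
  have hLR : ∀ x, gaussianLR m v x ^ s
      = ENNReal.ofReal (Real.exp (-(s * m ^ 2 / 2) / v) * Real.exp (s * m / v * x)) := fun x => by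
    rw [gaussianLR, ENNReal.ofReal_rpow_of_pos (Real.exp_pos _), ← Real.exp_mul, ← Real.exp_add]
    ring_nf
  simp_rw [hLR]
  exact ((integrable_exp_mul_gaussianReal _).const_mul _).lintegral_lt_top.ne

lemma hasSum_pow_mul_mul_div_rpow {r ρ α t : ℝ} (hr₀ : 0 < r) (hr₁ : r < 1) (hρ : 0 < ρ)
    (hα : 0 ≤ α) (ht : 0 < t) (m : ℕ) :
    HasSum (fun k : ℕ => r ^ k * ρ * (α / (r ^ (k + m) * ρ)) ^ (1 - t))
      ((r ^ m * ρ) ^ t / r ^ m * α ^ (1 - t) * (1 - r ^ t)⁻¹) := by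
  have hterm : ∀ k : ℕ, r ^ k * ρ * (α / (r ^ (k + m) * ρ)) ^ (1 - t)
      = (r ^ m * ρ) ^ t / r ^ m * α ^ (1 - t) * (r ^ t) ^ k := fun k => by
    have hx : 0 < r ^ (k + m) * ρ := by positivity
    have hxt : (r ^ (k + m) * ρ) ^ t = (r ^ t) ^ k * (r ^ m * ρ) ^ t := by
      rw [pow_add, mul_assoc, Real.mul_rpow (by positivity) (by positivity),
        Real.rpow_pow_comm hr₀.le]
    have hsub : (r ^ (k + m) * ρ) / (r ^ (k + m) * ρ) ^ (1 - t) = (r ^ (k + m) * ρ) ^ t := by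
      rw [← Real.rpow_one_sub' hx.le (by simpa using ht.ne'), sub_sub_cancel]
    have hk : r ^ k * ρ = r ^ (k + m) * ρ / r ^ m := by
      rw [pow_add]
      field_simp
    calc r ^ k * ρ * (α / (r ^ (k + m) * ρ)) ^ (1 - t)
        = (r ^ (k + m) * ρ) / (r ^ (k + m) * ρ) ^ (1 - t) / r ^ m * α ^ (1 - t) := by
          rw [Real.div_rpow hα hx.le, hk]
          ring
      _ = (r ^ m * ρ) ^ t / r ^ m * α ^ (1 - t) * (r ^ t) ^ k := by
          rw [hsub, hxt]
          ring
  simp_rw [hterm]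
  exact (hasSum_geometric_of_lt_one (by positivity) (Real.rpow_lt_one hr₀.le hr₁ ht)).mul_left _

lemma eventually_mul_rpow_le_rpow (c : ℝ) {a b : ℝ} (hab : a < b) :
    ∀ᶠ α in 𝓝[>] (0 : ℝ), c * α ^ b ≤ α ^ a := by
  have hlim : Tendsto (fun α : ℝ => c * α ^ (b - a)) (𝓝[>] 0) (𝓝 0) := by
    have h := ((Real.continuous_rpow_const (sub_pos.2 hab).le).tendsto 0).const_mul c
    rw [Real.zero_rpow (sub_pos.2 hab).ne', mul_zero] at h
    exact h.mono_left nhdsWithin_le_nhds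
  filter_upwards [hlim.eventually (ge_mem_nhds zero_lt_one), self_mem_nhdsWithin]
    with α hα (hα₀ : 0 < α)
  calc c * α ^ b = c * α ^ (b - a) * α ^ a := by
        rw [mul_assoc, ← Real.rpow_add hα₀, sub_add_cancel]
    _ ≤ α ^ a := mul_le_of_le_one_left (by positivity) hα

lemma exists_mem_Ioo_forall_of_eventually_nhdsGT {p : ℝ → Prop} (h : ∀ᶠ α in 𝓝[>] 0, p α) :
    ∃ α₀ ∈ Ioo (0 : ℝ) 1, ∀ α, 0 < α → α < α₀ → p α := by
  obtain ⟨u, hu, hsub⟩ := mem_nhdsGT_iff_exists_Ioo_subset.1 h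
  exact ⟨min u (1 / 2), ⟨lt_min hu (by norm_num), by linarith [min_le_right u (1 / 2)]⟩,
    fun α hα hαu => hsub ⟨hα, hαu.trans_le (min_le_left _ _)⟩⟩

lemma prod_fin_add_ite_lt {M : Type*} [CommMonoid M] (k n : ℕ) (a b : M) :
    ∏ j : Fin (k + n), (if (j : ℕ) < k then a else b) = a ^ k * b ^ n := by
  rw [Fin.prod_univ_eq_prod_range (fun j => if j < k then a else b), Finset.prod_range_add,
    Finset.prod_congr rfl fun j hj => if_pos (Finset.mem_range.1 hj),
    Finset.prod_congr rfl fun j _ => if_neg (Nat.not_lt.2 (Nat.le_add_right k j))]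
  simp

section ChangePoint

variable {σ A ρ : ℝ} {ν : ℕ → Measure (ℕ → ℝ)}

lemma changePointMeasure_apply [∀ k, SFinite (ν k)] (S : Set (ℕ × (ℕ → ℝ))) :
    changePointMeasure ρ ν S
      = ∑' k : ℕ, ENNReal.ofReal ((1 - ρ) ^ k * ρ) * ν (k + 1) (Prod.mk (k + 1) ⁻¹' S) := by
  rw [changePointMeasure, Measure.sum_apply_of_countable]
  congr 1 with k
  rw [Measure.smul_apply, smul_eq_mul, Measure.dirac_prod,
    (measurableEmbedding_prodMk_left _).map_apply]

lemma ofReal_mul_apply_le_changePointMeasure_lt [∀ k, SFinite (ν k)]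
    (τ : (ℕ → ℝ) → ℕ∞) (n : ℕ) :
    ENNReal.ofReal ((1 - ρ) ^ n * ρ) * ν (n + 1) {x | τ x = n}
      ≤ changePointMeasure ρ ν {ω | τ ω.2 < ω.1} := by
  rw [changePointMeasure_apply]
  refine le_trans ?_ (ENNReal.le_tsum n)
  gcongr
  intro x hx
  simp only [mem_preimage, mem_ofPred_eq] at hx ⊢
  rw [hx]
  exact_mod_cast n.lt_succ_self

lemma IsChangePointFamily.exists_pi_of_measurableSet (hν : IsChangePointFamily σ A ν) {n : ℕ}
    {E : Set (ℕ → ℝ)}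
    (hE : MeasurableSet[MeasurableSpace.comap (fun x : ℕ → ℝ => fun i : Fin n => x i)
      inferInstance] E) :
    ∃ B, MeasurableSet B ∧ ∀ k, ν k E = Measure.pi (fun i : Fin n =>
      if (i : ℕ) + 1 < k then gaussianReal 0 ⟨σ ^ 2, sq_nonneg σ⟩
      else gaussianReal A ⟨σ ^ 2, sq_nonneg σ⟩) B := by
  obtain ⟨B, hB, rfl⟩ := MeasurableSpace.measurableSet_comap.1 hE
  exact ⟨B, hB, fun k => by rw [← hν.2 k n, Measure.map_apply (by fun_prop) hB]⟩

lemma IsChangePointFamily.apply_le_mul_rpow (hσ : σ ≠ 0) (hν : IsChangePointFamily σ A ν)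
    {t : ℝ} (ht₀ : 0 < t) (ht₁ : t < 1) (k i : ℕ) {E : Set (ℕ → ℝ)}
    (hE : MeasurableSet[MeasurableSpace.comap (fun x : ℕ → ℝ => fun j : Fin (k + 1 + i) => x j)
      inferInstance] E) :
    ν (k + 1) E ≤ ((∫⁻ x, gaussianLR A ⟨σ ^ 2, sq_nonneg σ⟩ x ^ t⁻¹
      ∂gaussianReal 0 ⟨σ ^ 2, sq_nonneg σ⟩) ^ (i + 1)) ^ t * ν (k + 1 + i + 1) E ^ (1 - t) := by
  set v : ℝ≥0 := ⟨σ ^ 2, sq_nonneg σ⟩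
  have hv : v ≠ 0 := fun h => hσ (pow_eq_zero_iff two_ne_zero |>.1 (congrArg Subtype.val h))
  obtain ⟨B, hB, hνB⟩ := hν.exists_pi_of_measurableSet hE
  set f : Fin (k + 1 + i) → ℝ → ℝ≥0∞ := fun j => if (j : ℕ) < k then 1 else gaussianLR A v
  have hf : ∀ j, Measurable (f j) := fun j => by
    simp only [f]
    split_ifs <;> fun_prop
  have hpost : ∀ j : Fin (k + 1 + i), (if (j : ℕ) + 1 < k + 1 then gaussianReal 0 v
      else gaussianReal A v) = (gaussianReal 0 v).withDensity (f j) := fun j => by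
    simp only [f, add_lt_add_iff_right]
    split_ifs
    · exact withDensity_one.symm
    · exact gaussianReal_eq_withDensity_gaussianLR A hv
  have hpre : ∀ j : Fin (k + 1 + i), (if (j : ℕ) + 1 < k + 1 + i + 1 then gaussianReal 0 v
      else gaussianReal A v) = gaussianReal 0 v := fun j => if_pos (by omega)
  have : ∀ j, SigmaFinite ((gaussianReal 0 v).withDensity (f j)) := fun j => by
    rw [← hpost]
    infer_instance
  rw [hνB, hνB, funext hpost, funext hpre]
  refine (pi_withDensity_apply_le hf hB ht₀ ht₁).trans_eq ?_
  have hmoment : ∀ j : Fin (k + 1 + i), ∫⁻ y, f j y ^ t⁻¹ ∂gaussianReal 0 v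
      = if (j : ℕ) < k then 1 else ∫⁻ y, gaussianLR A v y ^ t⁻¹ ∂gaussianReal 0 v := fun j => by
    simp only [f]
    split_ifs <;> simp
  congr 2
  rw [Finset.prod_congr rfl fun j _ => hmoment j, show k + 1 + i = k + (i + 1) by omega,
    prod_fin_add_ite_lt, one_pow, one_mul]

lemma IsChangePointFamily.apply_eq_add_le (hσ : σ ≠ 0) (hρ : ρ ∈ Ioo (0 : ℝ) 1)
    (hν : IsChangePointFamily σ A ν) {t : ℝ} (ht₀ : 0 < t) (ht₁ : t < 1)
    {τ : (ℕ → ℝ) → ℕ∞} (hτ : IsDetectionRule τ) {α : ℝ}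
    (hFA : changePointMeasure ρ ν {ω | τ ω.2 < (ω.1 : ℕ∞)} ≤ ENNReal.ofReal α) (k i : ℕ) :
    ν (k + 1) {x | τ x = ((k + 1 + i : ℕ) : ℕ∞)}
      ≤ ((∫⁻ x, gaussianLR A ⟨σ ^ 2, sq_nonneg σ⟩ x ^ t⁻¹
        ∂gaussianReal 0 ⟨σ ^ 2, sq_nonneg σ⟩) ^ (i + 1)) ^ t
        * ENNReal.ofReal (α / ((1 - ρ) ^ (k + 1 + i) * ρ)) ^ (1 - t) := by
  have := hν.1
  have hw : 0 < (1 - ρ) ^ (k + 1 + i) * ρ := mul_pos (pow_pos (sub_pos.2 hρ.2) _) hρ.1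
  have hfalseAlarm : ν (k + 1 + i + 1) {x | τ x = ((k + 1 + i : ℕ) : ℕ∞)}
      ≤ ENNReal.ofReal (α / ((1 - ρ) ^ (k + 1 + i) * ρ)) := by
    rw [ENNReal.ofReal_div_of_pos hw, ENNReal.le_div_iff_mul_le
      (Or.inl (ENNReal.ofReal_pos.2 hw).ne') (Or.inl ENNReal.ofReal_ne_top), mul_comm]
    exact (ofReal_mul_apply_le_changePointMeasure_lt τ (k + 1 + i)).trans hFA
  exact (hν.apply_le_mul_rpow hσ ht₀ ht₁ k i (hτ _ (by omega))).trans (by gcongr)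

end ChangePoint

lemma exists_changePointMeasure_delay_le_mul_rpow {σ A ρ : ℝ} {ν : ℕ → Measure (ℕ → ℝ)}
    (hσ : σ ≠ 0) (hρ : ρ ∈ Ioo (0 : ℝ) 1) (hν : IsChangePointFamily σ A ν) (i : ℕ) {t : ℝ}
    (ht₀ : 0 < t) (ht₁ : t < 1) :
    ∃ c : ℝ, ∀ (τ : (ℕ → ℝ) → ℕ∞) (α : ℝ), 0 ≤ α → IsDetectionRule τ →
      changePointMeasure ρ ν {ω | τ ω.2 < (ω.1 : ℕ∞)} ≤ ENNReal.ofReal α →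
      changePointMeasure ρ ν {ω | τ ω.2 = ((ω.1 + i : ℕ) : ℕ∞)}
        ≤ ENNReal.ofReal (c * α ^ (1 - t)) := by
  have := hν.1
  set D := ((∫⁻ x, gaussianLR A ⟨σ ^ 2, sq_nonneg σ⟩ x ^ t⁻¹
    ∂gaussianReal 0 ⟨σ ^ 2, sq_nonneg σ⟩) ^ (i + 1)) ^ t
  have hD : D ≠ ∞ := ENNReal.rpow_ne_top_of_nonneg ht₀.le
    (ENNReal.pow_ne_top (lintegral_gaussianLR_rpow_ne_top _ _ _))
  have hρ₀ : 0 < ρ := hρ.1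
  set r := 1 - ρ
  have hr₀ : 0 < r := sub_pos.2 hρ.2
  refine ⟨D.toReal * ((r ^ (i + 1) * ρ) ^ t / r ^ (i + 1) * (1 - r ^ t)⁻¹),
    fun τ α hα hτ hFA => ?_⟩
  have hsum :=
    (hasSum_pow_mul_mul_div_rpow hr₀ (by linarith) hρ₀ hα ht₀ (i + 1)).mul_left D.toReal
  have hterm (k : ℕ) : ENNReal.ofReal (r ^ k * ρ) * ν (k + 1) {x | τ x = ((k + 1 + i : ℕ) : ℕ∞)}
      ≤ ENNReal.ofReal (D.toReal * (r ^ k * ρ * (α / (r ^ (k + (i + 1)) * ρ)) ^ (1 - t))) := by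
    grw [hν.apply_eq_add_le hσ hρ ht₀ ht₁ hτ hFA k i]
    rw [ENNReal.ofReal_mul ENNReal.toReal_nonneg, ENNReal.ofReal_toReal hD,
      ENNReal.ofReal_mul (p := r ^ k * ρ) (by positivity),
      ENNReal.ofReal_rpow_of_nonneg (by positivity) (by linarith),
      show k + 1 + i = k + (i + 1) by omega]
    exact (mul_left_comm _ _ _).le
  rw [changePointMeasure_apply]
  calc _ ≤ ∑' k : ℕ, ENNReal.ofReal
          (D.toReal * (r ^ k * ρ * (α / (r ^ (k + (i + 1)) * ρ)) ^ (1 - t))) :=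
        ENNReal.tsum_le_tsum hterm
    _ = _ := by
        rw [← ENNReal.ofReal_tsum_of_nonneg (fun k => by positivity) hsum.summable, hsum.tsum_eq]
        ring_nf

theorem detection_delay_exactly_i_prob_le_rpow_general
    (σ A ρ : ℝ) (hσ : 0 < σ) (hρ : ρ ∈ Set.Ioo (0 : ℝ) 1)
    (ν : ℕ → Measure (ℕ → ℝ)) (hν : IsChangePointFamily σ A ν)
    (i : ℕ)
    (τ : ℝ → (ℕ → ℝ) → ℕ∞)
    (hτ : ∀ α ∈ Set.Ioo (0 : ℝ) 1, IsDetectionRule (τ α))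
    (hFA : ∀ α ∈ Set.Ioo (0 : ℝ) 1,
      changePointMeasure ρ ν {ω | τ α ω.2 < (ω.1 : ℕ∞)} ≤ ENNReal.ofReal α) :
    ∀ ε > (0 : ℝ), ∃ α₀ ∈ Set.Ioo (0 : ℝ) 1, ∀ α : ℝ, 0 < α → α < α₀ →
      changePointMeasure ρ ν {ω | τ α ω.2 = ((ω.1 + i : ℕ) : ℕ∞)}
        ≤ ENNReal.ofReal (α ^ (1 - ε)) := by
  intro ε hε
  have ht₀ : 0 < min ε 1 / 2 := by positivity
  obtain ⟨c, hc⟩ := exists_changePointMeasure_delay_le_mul_rpow hσ.ne' hρ hν i ht₀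
    (by linarith [min_le_right ε 1])
  obtain ⟨α₀, hα₀, hsmall⟩ := exists_mem_Ioo_forall_of_eventually_nhdsGT
    (eventually_mul_rpow_le_rpow c (show 1 - ε < 1 - min ε 1 / 2 by linarith [min_le_left ε 1]))
  refine ⟨α₀, hα₀, fun α hα hαα₀ => ?_⟩
  have hαI : α ∈ Ioo (0 : ℝ) 1 := ⟨hα, hαα₀.trans hα₀.2⟩
  exact (hc (τ α) α hα.le (hτ α hαI) (hFA α hαI)).trans
    (ENNReal.ofReal_le_ofReal (hsmall α hα hαα₀))

/-- fix `K ≥ 0` and `0 ≤ i ≤ K`.  For any family of detection rules with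
false-alarm probability at most `α`, the probability of a delay of exactly `i` steps decays
essentially like `α`: for every `ε > 0` there is `α₀ ∈ (0,1)` with
`P(τ_α = Γ + i) ≤ α^{1−ε}` for all `0 < α < α₀`. -/
theorem detection_delay_exactly_i_prob_le_rpow
    (σ A ρ : ℝ) (hσ : 0 < σ) (hA : 0 < A) (hρ : ρ ∈ Set.Ioo (0 : ℝ) 1)
    (ν : ℕ → Measure (ℕ → ℝ)) (hν : IsChangePointFamily σ A ν)
    (K i : ℕ) (hiK : i ≤ K)
    (τ : ℝ → (ℕ → ℝ) → ℕ∞)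
    (hτ : ∀ α ∈ Set.Ioo (0 : ℝ) 1, IsDetectionRule (τ α))
    (hFA : ∀ α ∈ Set.Ioo (0 : ℝ) 1,
      changePointMeasure ρ ν {ω | τ α ω.2 < (ω.1 : ℕ∞)} ≤ ENNReal.ofReal α) :
    ∀ ε > (0 : ℝ), ∃ α₀ ∈ Set.Ioo (0 : ℝ) 1, ∀ α : ℝ, 0 < α → α < α₀ →
      changePointMeasure ρ ν {ω | τ α ω.2 = ((ω.1 + i : ℕ) : ℕ∞)}
        ≤ ENNReal.ofReal (α ^ (1 - ε)) :=
  detection_delay_exactly_i_prob_le_rpow_general σ A ρ hσ hρ ν hν i τ hτ hFA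

end
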